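/- Let l ∈ ℕ with l ≥ 2 and let 0 < ρ ≤ 1. Define the polynomial p(x) = x² · Σ_{n=0}^{l} ((l+1)_n·(−l)_n)/((3)_n · n!) · xⁿ. Then every real-analytic function v : (−ρ,ρ) → ℂ satisfying (1−x)·x·v''(x) + (−1+2x)·v'(x) + (l−1)(l+2)·v(x) = 0 for all x ∈ (−ρ,ρ) is a constant multiple of p. -/

import Mathlib

open Set Filter Topology

/-- The polynomial `x² · F(l+1, -l, 3; x)`. -/
noncomputable def hypergeomP (l : ℕ) (x : ℂ) : ℂ :=
  x ^ 2 * ∑ n ∈ Finset.range (l + 1),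
    ((ascPochhammer ℂ n).eval ((l : ℂ) + 1) * (ascPochhammer ℂ n).eval (-(l : ℂ))) /
        ((ascPochhammer ℂ n).eval 3 * (n.factorial : ℂ)) * x ^ n

namespace Stmt5Aux

/-- Taylor coefficients of the hypergeometric factor. -/
noncomputable def tc (l k : ℕ) : ℂ :=
  ((ascPochhammer ℂ k).eval ((l : ℂ) + 1) * (ascPochhammer ℂ k).eval (-(l : ℂ))) /
    ((ascPochhammer ℂ k).eval 3 * (k.factorial : ℂ))

lemma aDeriv {U : Set ℝ} {f : ℝ → ℂ} (hf : AnalyticOnNhd ℝ f U) (n : ℕ) :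
    AnalyticOnNhd ℝ (iteratedDeriv n f) U := by
  rw [iteratedDeriv_eq_iterate]; exact hf.iterated_deriv n

lemma ofReal_analytic (U : Set ℝ) : AnalyticOnNhd ℝ (fun y : ℝ => (y : ℂ)) U :=
  Complex.ofRealCLM.analyticOnNhd U

lemma iter_add {U : Set ℝ} (hU : IsOpen U) {f g : ℝ → ℂ} (hf : AnalyticOnNhd ℝ f U)
    (hg : AnalyticOnNhd ℝ g U) (n : ℕ) :
    ∀ x ∈ U, iteratedDeriv n (fun y => f y + g y) x
      = iteratedDeriv n f x + iteratedDeriv n g x := by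
  induction n with
  | zero => intro x hx; simp
  | succ n ih =>
    intro x hx
    have hev : iteratedDeriv n (fun y => f y + g y)
        =ᶠ[𝓝 x] fun y => iteratedDeriv n f y + iteratedDeriv n g y :=
      Filter.eventuallyEq_of_mem (hU.mem_nhds hx) ih
    rw [iteratedDeriv_succ, iteratedDeriv_succ, iteratedDeriv_succ, hev.deriv_eq]
    exact deriv_add (aDeriv hf n x hx).differentiableAt (aDeriv hg n x hx).differentiableAt

lemma iter_cmul {U : Set ℝ} (hU : IsOpen U) {f : ℝ → ℂ} (hf : AnalyticOnNhd ℝ f U)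
    (c : ℂ) (n : ℕ) :
    ∀ x ∈ U, iteratedDeriv n (fun y => c * f y) x = c * iteratedDeriv n f x := by
  induction n with
  | zero => intro x hx; simp
  | succ n ih =>
    intro x hx
    have hev : iteratedDeriv n (fun y => c * f y)
        =ᶠ[𝓝 x] fun y => c * iteratedDeriv n f y :=
      Filter.eventuallyEq_of_mem (hU.mem_nhds hx) ih
    rw [iteratedDeriv_succ, iteratedDeriv_succ, hev.deriv_eq,
      deriv_const_mul c (aDeriv hf n x hx).differentiableAt]

lemma iter_xmul {U : Set ℝ} (hU : IsOpen U) {f : ℝ → ℂ} (hf : AnalyticOnNhd ℝ f U) (n : ℕ) :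
    ∀ x ∈ U, iteratedDeriv n (fun y : ℝ => (y : ℂ) * f y) x
      = (x : ℂ) * iteratedDeriv n f x + n * iteratedDeriv (n - 1) f x := by
  induction n with
  | zero => intro x hx; simp
  | succ n ih =>
    intro x hx
    have hev : iteratedDeriv n (fun y : ℝ => (y : ℂ) * f y)
        =ᶠ[𝓝 x] fun y : ℝ => (y : ℂ) * iteratedDeriv n f y + n * iteratedDeriv (n - 1) f y :=
      Filter.eventuallyEq_of_mem (hU.mem_nhds hx) ih
    rw [iteratedDeriv_succ, hev.deriv_eq]
    have hx1 : HasDerivAt (fun y : ℝ => (y : ℂ)) 1 x := (hasDerivAt_id x).ofReal_comp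
    have hx2 : HasDerivAt (iteratedDeriv n f) (iteratedDeriv (n + 1) f x) x := by
      rw [iteratedDeriv_succ]
      exact (aDeriv hf n x hx).differentiableAt.hasDerivAt
    have h1 := hx1.fun_mul hx2
    have hd2 : DifferentiableAt ℝ (iteratedDeriv (n - 1) f) x :=
      (aDeriv hf (n - 1) x hx).differentiableAt
    rw [deriv_fun_add h1.differentiableAt (hd2.const_mul _), h1.deriv, deriv_const_mul _ hd2]
    cases n with
    | zero => simp; ring
    | succ m =>
      have hm : deriv (iteratedDeriv (m + 1 - 1) f) x = iteratedDeriv (m + 1) f x := by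
        simp only [Nat.add_sub_cancel, ← iteratedDeriv_succ]
      rw [hm]
      simp only [Nat.add_sub_cancel]
      push_cast; ring

lemma iter_xmul0 {U : Set ℝ} (hU : IsOpen U) (h0 : (0:ℝ) ∈ U) {f : ℝ → ℂ}
    (hf : AnalyticOnNhd ℝ f U) (n : ℕ) :
    iteratedDeriv n (fun y : ℝ => (y : ℂ) * f y) 0 = n * iteratedDeriv (n - 1) f 0 := by
  simpa using iter_xmul hU hf n 0 h0

lemma iter_x2mul0 {U : Set ℝ} (hU : IsOpen U) (h0 : (0:ℝ) ∈ U) {f : ℝ → ℂ}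
    (hf : AnalyticOnNhd ℝ f U) (n : ℕ) :
    iteratedDeriv n (fun y : ℝ => (y : ℂ) * ((y : ℂ) * f y)) 0
      = (n : ℂ) * ((n - 1 : ℕ) : ℂ) * iteratedDeriv (n - 2) f 0 := by
  have hxf : AnalyticOnNhd ℝ (fun y : ℝ => (y : ℂ) * f y) U := (ofReal_analytic U).mul hf
  rw [iter_xmul0 hU h0 hxf n, iter_xmul0 hU h0 hf (n - 1)]
  have : n - 1 - 1 = n - 2 := by omega
  rw [this]; ring

lemma iter_zero_fun (n : ℕ) (x : ℝ) : iteratedDeriv n (fun _ : ℝ => (0:ℂ)) x = 0 := by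
  induction n generalizing x with
  | zero => simp
  | succ n ih =>
    rw [iteratedDeriv_succ']
    have : deriv (fun _ : ℝ => (0:ℂ)) = fun _ : ℝ => (0:ℂ) := by
      funext y; simp
    rw [this]; exact ih x

lemma iter_const (c : ℂ) (n : ℕ) (x : ℝ) :
    iteratedDeriv n (fun _ : ℝ => c) x = if n = 0 then c else 0 := by
  cases n with
  | zero => simp
  | succ n =>
    rw [iteratedDeriv_succ']
    have : deriv (fun _ : ℝ => c) = fun _ : ℝ => (0:ℂ) := by funext y; simp
    rw [this, iter_zero_fun]; simp

lemma iter_pow (m : ℕ) : ∀ n : ℕ, iteratedDeriv n (fun y : ℝ => (y : ℂ) ^ m) 0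
    = if n = m then (m.factorial : ℂ) else 0 := by
  induction m with
  | zero =>
    intro n
    simpa using iter_const 1 n 0
  | succ m ih =>
    intro n
    have hpow : AnalyticOnNhd ℝ (fun y : ℝ => (y : ℂ) ^ m) univ :=
      (ofReal_analytic univ).pow m
    have hrw : (fun y : ℝ => (y : ℂ) ^ (m + 1)) = fun y : ℝ => (y : ℂ) * (y : ℂ) ^ m := by
      funext y; ring
    rw [hrw, iter_xmul0 isOpen_univ (mem_univ 0) hpow n, ih (n - 1)]
    cases n with
    | zero => simp
    | succ k =>
      simp only [Nat.add_sub_cancel]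
      by_cases hk : k = m
      · subst hk
        simp only [if_pos rfl, if_pos rfl, Nat.factorial_succ]
        push_cast; ring
      · have h1 : ¬(k + 1 = m + 1) := by omega
        simp [hk, h1]

lemma iter_sum_monomials (t : ℕ → ℂ) (s : Finset ℕ) (n : ℕ) :
    iteratedDeriv n (fun x : ℝ => ∑ k ∈ s, t k * (x : ℂ) ^ (k + 2)) 0
      = ∑ k ∈ s, t k * (if n = k + 2 then ((k + 2).factorial : ℂ) else 0) := by
  induction s using Finset.cons_induction with
  | empty => simpa using iter_zero_fun n 0
  | cons a s ha ih =>
    have h1 : AnalyticOnNhd ℝ (fun x : ℝ => t a * (x : ℂ) ^ (a + 2)) univ :=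
      analyticOnNhd_const.mul ((ofReal_analytic univ).pow _)
    have h2 : AnalyticOnNhd ℝ (fun x : ℝ => ∑ k ∈ s, t k * (x : ℂ) ^ (k + 2)) univ :=
      Finset.analyticOnNhd_fun_sum s fun k _ =>
        analyticOnNhd_const.mul ((ofReal_analytic univ).fun_pow _)
    have hrw : (fun x : ℝ => ∑ k ∈ Finset.cons a s ha, t k * (x : ℂ) ^ (k + 2))
        = fun x : ℝ => t a * (x : ℂ) ^ (a + 2) + ∑ k ∈ s, t k * (x : ℂ) ^ (k + 2) :=
      funext fun x => Finset.sum_cons ha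
    rw [hrw, iter_add isOpen_univ h1 h2 n 0 (mem_univ 0),
      iter_cmul isOpen_univ ((ofReal_analytic univ).fun_pow _) (t a) n 0 (mem_univ 0),
      iter_pow (a + 2) n, ih, Finset.sum_cons]

lemma hyp_eq (l : ℕ) : (fun x : ℝ => hypergeomP l (x : ℂ))
    = fun x : ℝ => ∑ k ∈ Finset.range (l + 1), tc l k * (x : ℂ) ^ (k + 2) := by
  funext x
  rw [hypergeomP, Finset.mul_sum]
  exact Finset.sum_congr rfl fun k _ => by rw [tc]; ring

lemma P_eq (l n : ℕ) : iteratedDeriv n (fun x : ℝ => hypergeomP l (x : ℂ)) 0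
    = if 2 ≤ n ∧ n - 2 ≤ l then tc l (n - 2) * (n.factorial : ℂ) else 0 := by
  rw [hyp_eq, iter_sum_monomials]
  by_cases h : 2 ≤ n ∧ n - 2 ≤ l
  · rw [if_pos h, Finset.sum_eq_single (n - 2)]
    · have hn : n = (n - 2) + 2 := by omega
      rw [if_pos hn, ← hn]
    · intro b _ hbne
      have : ¬ (n = b + 2) := by omega
      rw [if_neg this, mul_zero]
    · intro habs
      exact absurd (Finset.mem_range.mpr (by omega)) habs
  · rw [if_neg h]
    apply Finset.sum_eq_zero
    intro k hk
    have : ¬ (n = k + 2) := by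
      rw [Finset.mem_range] at hk; omega
    rw [if_neg this, mul_zero]

lemma asc_succ_eval (z : ℂ) (k : ℕ) :
    (ascPochhammer ℂ (k + 1)).eval z = (ascPochhammer ℂ k).eval z * (z + k) := by
  rw [ascPochhammer_succ_right]
  simp [Polynomial.eval_mul]

lemma C_ne (k : ℕ) : (ascPochhammer ℂ k).eval 3 ≠ 0 := by
  induction k with
  | zero => simp [ascPochhammer_zero]
  | succ k ih =>
    rw [asc_succ_eval]
    refine mul_ne_zero ih ?_
    have : (3 : ℂ) + k = ((3 + k : ℕ) : ℂ) := by push_cast; ring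
    rw [this]
    exact Nat.cast_ne_zero.mpr (by omega)

lemma recP (l n : ℕ) :
    ((n : ℂ) - 1) * iteratedDeriv (n + 1) (fun x : ℝ => hypergeomP l (x : ℂ)) 0
      = ((n : ℂ) ^ 2 - 3 * n - ((l : ℂ) - 1) * ((l : ℂ) + 2))
        * iteratedDeriv n (fun x : ℝ => hypergeomP l (x : ℂ)) 0 := by
  rw [P_eq, P_eq]
  match n with
  | 0 => norm_num
  | 1 => norm_num
  | (k + 2) =>
    have hfac : ((k : ℂ) + 2) ^ 2 - 3 * ((k : ℂ) + 2) - ((l : ℂ) - 1) * ((l : ℂ) + 2)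
        = ((k : ℂ) - l) * ((k : ℂ) + l + 1) := by ring
    rcases lt_trichotomy k l with hkl | hkl | hkl
    · have c1 : 2 ≤ k + 2 + 1 ∧ k + 2 + 1 - 2 ≤ l := ⟨by omega, by omega⟩
      have c2 : 2 ≤ k + 2 ∧ k + 2 - 2 ≤ l := ⟨by omega, by omega⟩
      rw [if_pos c1, if_pos c2]
      have e1 : k + 2 + 1 - 2 = k + 1 := by omega
      have e2 : k + 2 - 2 = k := by omega
      rw [e1, e2]
      rw [tc, tc, asc_succ_eval, asc_succ_eval, asc_succ_eval]
      have hC := C_ne k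
      have hF : ((k.factorial : ℂ)) ≠ 0 := Nat.cast_ne_zero.mpr k.factorial_ne_zero
      have h3k : (3 : ℂ) + k ≠ 0 := by
        have : (3 : ℂ) + k = ((3 + k : ℕ) : ℂ) := by push_cast; ring
        rw [this]; exact Nat.cast_ne_zero.mpr (by omega)
      have hk1 : ((k : ℂ) + 1) ≠ 0 := by
        have : (k : ℂ) + 1 = ((k + 1 : ℕ) : ℂ) := by push_cast; ring
        rw [this]; exact Nat.cast_ne_zero.mpr (by omega)
      have hfact1 : (((k + 1).factorial : ℂ)) = ((k : ℂ) + 1) * (k.factorial : ℂ) := by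
        rw [Nat.factorial_succ]; push_cast; ring
      have hfact3 : (((k + 2 + 1).factorial : ℂ))
          = ((k : ℂ) + 3) * ((k : ℂ) + 2) * ((k : ℂ) + 1) * (k.factorial : ℂ) := by
        show (((k + 3).factorial : ℂ)) = _
        rw [Nat.factorial_succ, Nat.factorial_succ, Nat.factorial_succ]; push_cast; ring
      have hfact2 : (((k + 2).factorial : ℂ))
          = ((k : ℂ) + 2) * ((k : ℂ) + 1) * (k.factorial : ℂ) := by
        rw [Nat.factorial_succ, Nat.factorial_succ]; push_cast; ring
      rw [hfact1, hfact3, hfact2]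
      push_cast
      field_simp
      ring
    · subst hkl
      have c1 : ¬ (2 ≤ k + 2 + 1 ∧ k + 2 + 1 - 2 ≤ k) := by omega
      rw [if_neg c1, mul_zero]
      have e2 : k + 2 - 2 = k := by omega
      have h0 : ((k : ℂ) + 2) ^ 2 - 3 * ((k : ℂ) + 2) - ((k : ℂ) - 1) * ((k : ℂ) + 2) = 0 := by
        ring
      push_cast
      rw [h0, zero_mul]
    · have c1 : ¬ (2 ≤ k + 2 + 1 ∧ k + 2 + 1 - 2 ≤ l) := by omega
      have c2 : ¬ (2 ≤ k + 2 ∧ k + 2 - 2 ≤ l) := by omega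
      rw [if_neg c1, if_neg c2, mul_zero, mul_zero]

lemma iter_d1 (f : ℝ → ℂ) (k : ℕ) (x : ℝ) :
    iteratedDeriv k (deriv f) x = iteratedDeriv (k + 1) f x := by
  rw [iteratedDeriv_succ']

lemma iter_d2 (f : ℝ → ℂ) (k : ℕ) (x : ℝ) :
    iteratedDeriv k (deriv (deriv f)) x = iteratedDeriv (k + 2) f x := by
  rw [iter_d1, iter_d1]

lemma recW {ρ : ℝ} (hρ₀ : 0 < ρ) {v : ℝ → ℂ} (hv : AnalyticOnNhd ℝ v (Ioo (-ρ) ρ)) (lam : ℂ)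
    (heq : ∀ x ∈ Ioo (-ρ) ρ,
      (1 - (x : ℂ)) * (x : ℂ) * deriv (deriv v) x + (-1 + 2 * (x : ℂ)) * deriv v x
        + lam * v x = 0) (n : ℕ) :
    ((n : ℂ) - 1) * iteratedDeriv (n + 1) v 0
      = ((n : ℂ) ^ 2 - 3 * n - lam) * iteratedDeriv n v 0 := by
  set I := Ioo (-ρ) ρ with hIdef
  have hI : IsOpen I := isOpen_Ioo
  have h0 : (0 : ℝ) ∈ I := by
    constructor <;> simp [hρ₀]
  have hv1 : AnalyticOnNhd ℝ (deriv v) I := hv.deriv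
  have hv2 : AnalyticOnNhd ℝ (deriv (deriv v)) I := hv1.deriv
  have hx : AnalyticOnNhd ℝ (fun y : ℝ => (y : ℂ)) I := ofReal_analytic I
  have key : ∀ m : ℕ, iteratedDeriv m (fun x : ℝ =>
      (1 - (x : ℂ)) * (x : ℂ) * deriv (deriv v) x + (-1 + 2 * (x : ℂ)) * deriv v x
        + lam * v x) 0 = 0 := by
    intro m
    have hev : (fun x : ℝ =>
        (1 - (x : ℂ)) * (x : ℂ) * deriv (deriv v) x + (-1 + 2 * (x : ℂ)) * deriv v x
          + lam * v x) =ᶠ[𝓝 (0 : ℝ)] fun _ => (0 : ℂ) :=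
      Filter.eventuallyEq_of_mem (hI.mem_nhds h0) heq
    rw [hev.iteratedDeriv_eq m]
    exact iter_zero_fun m 0
  have decomp : (fun x : ℝ =>
      (1 - (x : ℂ)) * (x : ℂ) * deriv (deriv v) x + (-1 + 2 * (x : ℂ)) * deriv v x
        + lam * v x)
      = fun x : ℝ => ((x : ℂ) * deriv (deriv v) x)
          + (((-1 : ℂ)) * ((x : ℂ) * ((x : ℂ) * deriv (deriv v) x))
          + (((-1 : ℂ)) * deriv v x
          + (((2 : ℂ)) * ((x : ℂ) * deriv v x) + lam * v x))) := by
    funext x; ring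
  have a1 : AnalyticOnNhd ℝ (fun x : ℝ => (x : ℂ) * deriv (deriv v) x) I := hx.mul hv2
  have a2' : AnalyticOnNhd ℝ (fun x : ℝ => (x : ℂ) * ((x : ℂ) * deriv (deriv v) x)) I :=
    hx.mul a1
  have a2 : AnalyticOnNhd ℝ
      (fun x : ℝ => ((-1 : ℂ)) * ((x : ℂ) * ((x : ℂ) * deriv (deriv v) x))) I :=
    analyticOnNhd_const.mul a2'
  have a3 : AnalyticOnNhd ℝ (fun x : ℝ => ((-1 : ℂ)) * deriv v x) I :=
    analyticOnNhd_const.mul hv1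
  have a4' : AnalyticOnNhd ℝ (fun x : ℝ => (x : ℂ) * deriv v x) I := hx.mul hv1
  have a4 : AnalyticOnNhd ℝ (fun x : ℝ => ((2 : ℂ)) * ((x : ℂ) * deriv v x)) I :=
    analyticOnNhd_const.mul a4'
  have a5 : AnalyticOnNhd ℝ (fun x : ℝ => lam * v x) I := analyticOnNhd_const.mul hv
  have b45 : AnalyticOnNhd ℝ
      (fun x : ℝ => ((2 : ℂ)) * ((x : ℂ) * deriv v x) + lam * v x) I := a4.add a5
  have b345 : AnalyticOnNhd ℝ
      (fun x : ℝ => ((-1 : ℂ)) * deriv v x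
        + (((2 : ℂ)) * ((x : ℂ) * deriv v x) + lam * v x)) I := a3.add b45
  have b2345 : AnalyticOnNhd ℝ
      (fun x : ℝ => ((-1 : ℂ)) * ((x : ℂ) * ((x : ℂ) * deriv (deriv v) x))
        + (((-1 : ℂ)) * deriv v x
          + (((2 : ℂ)) * ((x : ℂ) * deriv v x) + lam * v x))) I := a2.add b345
  have expand : ∀ m : ℕ,
      (m : ℂ) * iteratedDeriv (m - 1) (deriv (deriv v)) 0
        + ((-1) * ((m : ℂ) * ((m - 1 : ℕ) : ℂ) * iteratedDeriv (m - 2) (deriv (deriv v)) 0)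
        + ((-1) * iteratedDeriv m (deriv v) 0
        + (2 * ((m : ℂ) * iteratedDeriv (m - 1) (deriv v) 0)
          + lam * iteratedDeriv m v 0))) = 0 := by
    intro m
    have h := key m
    rw [decomp] at h
    have s1 : iteratedDeriv m (fun x : ℝ => ((x : ℂ) * deriv (deriv v) x)
          + (((-1 : ℂ)) * ((x : ℂ) * ((x : ℂ) * deriv (deriv v) x))
          + (((-1 : ℂ)) * deriv v x
          + (((2 : ℂ)) * ((x : ℂ) * deriv v x) + lam * v x)))) 0
        = iteratedDeriv m (fun x : ℝ => (x : ℂ) * deriv (deriv v) x) 0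
          + iteratedDeriv m (fun x : ℝ => ((-1 : ℂ)) * ((x : ℂ) * ((x : ℂ) * deriv (deriv v) x))
            + (((-1 : ℂ)) * deriv v x
              + (((2 : ℂ)) * ((x : ℂ) * deriv v x) + lam * v x))) 0 :=
      iter_add hI a1 b2345 m 0 h0
    have s2 : iteratedDeriv m (fun x : ℝ => ((-1 : ℂ)) * ((x : ℂ) * ((x : ℂ) * deriv (deriv v) x))
          + (((-1 : ℂ)) * deriv v x
            + (((2 : ℂ)) * ((x : ℂ) * deriv v x) + lam * v x))) 0
        = iteratedDeriv m (fun x : ℝ => ((-1 : ℂ)) * ((x : ℂ) * ((x : ℂ) * deriv (deriv v) x))) 0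
          + iteratedDeriv m (fun x : ℝ => ((-1 : ℂ)) * deriv v x
            + (((2 : ℂ)) * ((x : ℂ) * deriv v x) + lam * v x)) 0 :=
      iter_add hI a2 b345 m 0 h0
    have s3 : iteratedDeriv m (fun x : ℝ => ((-1 : ℂ)) * deriv v x
          + (((2 : ℂ)) * ((x : ℂ) * deriv v x) + lam * v x)) 0
        = iteratedDeriv m (fun x : ℝ => ((-1 : ℂ)) * deriv v x) 0
          + iteratedDeriv m (fun x : ℝ => ((2 : ℂ)) * ((x : ℂ) * deriv v x) + lam * v x) 0 :=
      iter_add hI a3 b45 m 0 h0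
    have s4 : iteratedDeriv m (fun x : ℝ => ((2 : ℂ)) * ((x : ℂ) * deriv v x) + lam * v x) 0
        = iteratedDeriv m (fun x : ℝ => ((2 : ℂ)) * ((x : ℂ) * deriv v x)) 0
          + iteratedDeriv m (fun x : ℝ => lam * v x) 0 :=
      iter_add hI a4 a5 m 0 h0
    rw [s1, s2, s3, s4] at h
    rw [iter_cmul hI a2' (-1) m 0 h0, iter_cmul hI hv1 (-1) m 0 h0,
      iter_cmul hI a4' 2 m 0 h0, iter_cmul hI hv lam m 0 h0] at h
    rw [iter_xmul0 hI h0 hv2 m, iter_x2mul0 hI h0 hv2 m, iter_xmul0 hI h0 hv1 m] at h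
    exact h
  match n with
  | 0 =>
    have h := expand 0
    have e1 : iteratedDeriv 0 (deriv v) 0 = iteratedDeriv 1 v 0 := iter_d1 v 0 0
    rw [e1] at h
    push_cast at h ⊢
    linear_combination h
  | 1 =>
    have h := expand 1
    have e1 : iteratedDeriv 1 (deriv v) 0 = iteratedDeriv 2 v 0 := iter_d1 v 1 0
    have e2 : iteratedDeriv 0 (deriv (deriv v)) 0 = iteratedDeriv 2 v 0 := iter_d2 v 0 0
    have e3 : iteratedDeriv 0 (deriv v) 0 = iteratedDeriv 1 v 0 := iter_d1 v 0 0
    simp only [show (1:ℕ) - 1 = 0 from rfl, show (1:ℕ) - 2 = 0 from rfl] at h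
    rw [e1, e2, e3] at h
    push_cast at h ⊢
    linear_combination h
  | (m + 2) =>
    have h := expand (m + 2)
    have e0 : m + 2 - 1 = m + 1 := by omega
    have e0' : m + 2 - 2 = m := by omega
    rw [e0, e0'] at h
    have e1 : iteratedDeriv (m + 1) (deriv (deriv v)) 0 = iteratedDeriv (m + 3) v 0 :=
      iter_d2 v (m + 1) 0
    have e2 : iteratedDeriv m (deriv (deriv v)) 0 = iteratedDeriv (m + 2) v 0 :=
      iter_d2 v m 0
    have e3 : iteratedDeriv (m + 2) (deriv v) 0 = iteratedDeriv (m + 3) v 0 :=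
      iter_d1 v (m + 2) 0
    have e4 : iteratedDeriv (m + 1) (deriv v) 0 = iteratedDeriv (m + 2) v 0 :=
      iter_d1 v (m + 1) 0
    rw [e1, e2, e3, e4] at h
    push_cast at h ⊢
    linear_combination h

end Stmt5Aux


open Stmt5Aux

/-- Every real-analytic solution on `(-ρ, ρ)` of the hypergeometric
equation with parameters `a = l-1`, `b = -l-2`, `c = -1` is a constant multiple of
`x² · F(l+1, -l, 3; x)`. -/
theorem stmt_5 (l : ℕ) (hl : 2 ≤ l) (ρ : ℝ) (hρ₀ : 0 < ρ) (hρ₁ : ρ ≤ 1)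
    (v : ℝ → ℂ) (hv : AnalyticOnNhd ℝ v (Ioo (-ρ) ρ))
    (heq : ∀ x ∈ Ioo (-ρ) ρ,
      (1 - (x : ℂ)) * (x : ℂ) * deriv (deriv v) x + (-1 + 2 * (x : ℂ)) * deriv v x
        + ((l : ℂ) - 1) * ((l : ℂ) + 2) * v x = 0) :
    ∃ c : ℂ, ∀ x ∈ Ioo (-ρ) ρ, v x = c * hypergeomP l (x : ℂ) := by
  have hI : IsOpen (Ioo (-ρ) ρ) := isOpen_Ioo
  have h0 : (0 : ℝ) ∈ Ioo (-ρ) ρ := by constructor <;> simp [hρ₀]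
  obtain ⟨lam, hlam⟩ : ∃ lam : ℂ, lam = ((l : ℂ) - 1) * ((l : ℂ) + 2) := ⟨_, rfl⟩
  rw [← hlam] at heq
  have hW : ∀ n : ℕ, ((n : ℂ) - 1) * iteratedDeriv (n + 1) v 0
      = ((n : ℂ) ^ 2 - 3 * n - lam) * iteratedDeriv n v 0 := recW hρ₀ hv lam heq
  -- the relevant nonvanishing facts
  have hl0 : ((l : ℂ)) ≠ 0 := Nat.cast_ne_zero.mpr (by omega)
  have hlm1 : ((l : ℂ) - 1) ≠ 0 := by
    intro hc
    have h1 : (l : ℂ) = ((1 : ℕ) : ℂ) := by push_cast; linear_combination hc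
    have := Nat.cast_injective (R := ℂ) h1
    omega
  have hlp2 : ((l : ℂ) + 2) ≠ 0 := by
    have : (l : ℂ) + 2 = ((l + 2 : ℕ) : ℂ) := by push_cast; ring
    rw [this]; exact Nat.cast_ne_zero.mpr (by omega)
  have hlp1 : ((l : ℂ) + 1) ≠ 0 := by
    have : (l : ℂ) + 1 = ((l + 1 : ℕ) : ℂ) := by push_cast; ring
    rw [this]; exact Nat.cast_ne_zero.mpr (by omega)
  have hlam0 : lam ≠ 0 := by rw [hlam]; exact mul_ne_zero hlm1 hlp2
  have hlam2 : lam + 2 ≠ 0 := by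
    have : lam + 2 = (l : ℂ) * ((l : ℂ) + 1) := by rw [hlam]; ring
    rw [this]; exact mul_ne_zero hl0 hlp1
  -- W 1 = 0 and W 0 = 0
  have W1 : iteratedDeriv 1 v 0 = 0 := by
    have h := hW 1
    push_cast at h
    have h2 : (lam + 2) * iteratedDeriv 1 v 0 = 0 := by linear_combination h
    rcases mul_eq_zero.mp h2 with h' | h'
    · exact absurd h' hlam2
    · exact h'
  have W0 : iteratedDeriv 0 v 0 = 0 := by
    have h := hW 0
    push_cast at h
    rw [W1] at h
    have h2 : lam * iteratedDeriv 0 v 0 = 0 := by linear_combination h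
    rcases mul_eq_zero.mp h2 with h' | h'
    · exact absurd h' hlam0
    · exact h'
  -- values of the polynomial side
  have P0 : iteratedDeriv 0 (fun x : ℝ => hypergeomP l (x : ℂ)) 0 = 0 := by
    rw [P_eq]; norm_num
  have P1 : iteratedDeriv 1 (fun x : ℝ => hypergeomP l (x : ℂ)) 0 = 0 := by
    rw [P_eq]; norm_num
  have P2 : iteratedDeriv 2 (fun x : ℝ => hypergeomP l (x : ℂ)) 0 = 2 := by
    rw [P_eq, if_pos ⟨le_refl 2, by omega⟩]
    simp [tc, ascPochhammer_zero]
  set c : ℂ := iteratedDeriv 2 v 0 / 2 with hc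
  -- all derivatives agree
  have main : ∀ n : ℕ, iteratedDeriv n v 0
      = c * iteratedDeriv n (fun x : ℝ => hypergeomP l (x : ℂ)) 0 := by
    intro n
    induction n with
    | zero => rw [W0, P0, mul_zero]
    | succ k ih =>
      match k, ih with
      | 0, _ => rw [W1, P1, mul_zero]
      | 1, _ =>
        rw [P2, hc]
        field_simp
      | (m + 2), ih =>
        have h1 := hW (m + 2)
        have h2 := recP l (m + 2)
        rw [ih] at h1
        have hkne : (((m + 2 : ℕ) : ℂ) - 1) ≠ 0 := by
          push_cast
          intro hcon
          have hne : ((m + 1 : ℕ) : ℂ) ≠ 0 := Nat.cast_ne_zero.mpr (by omega)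
          apply hne
          push_cast
          linear_combination hcon
        refine mul_left_cancel₀ hkne ?_
        rw [h1]
        rw [← hlam] at h2
        linear_combination (-c) * h2
  -- the difference function
  have pA : AnalyticOnNhd ℝ (fun x : ℝ => hypergeomP l (x : ℂ)) (Ioo (-ρ) ρ) := by
    rw [hyp_eq]
    exact Finset.analyticOnNhd_fun_sum _ fun k _ =>
      analyticOnNhd_const.mul ((ofReal_analytic _).fun_pow _)
  have cpA : AnalyticOnNhd ℝ (fun x : ℝ => (-c) * hypergeomP l (x : ℂ)) (Ioo (-ρ) ρ) :=
    analyticOnNhd_const.mul pA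
  have hA : AnalyticOnNhd ℝ (fun x : ℝ => v x + (-c) * hypergeomP l (x : ℂ)) (Ioo (-ρ) ρ) :=
    hv.add cpA
  have hcoeff : ∀ n : ℕ,
      iteratedDeriv n (fun x : ℝ => v x + (-c) * hypergeomP l (x : ℂ)) 0 = 0 := by
    intro n
    have s1 : iteratedDeriv n (fun x : ℝ => v x + (-c) * hypergeomP l (x : ℂ)) 0
        = iteratedDeriv n v 0
          + iteratedDeriv n (fun x : ℝ => (-c) * hypergeomP l (x : ℂ)) 0 :=
      iter_add hI hv cpA n 0 h0
    rw [s1, iter_cmul hI pA (-c) n 0 h0, main n]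
    ring
  -- power series of the difference vanishes
  obtain ⟨q, hq⟩ := hA 0 h0
  obtain ⟨r, hqb⟩ := hq
  have hq0 : ∀ n : ℕ, q n = 0 := by
    intro n
    have hf := hqb.factorial_smul (1 : ℝ) n
    have hz : (n.factorial) • q.coeff n = 0 := by
      rw [FormalMultilinearSeries.coeff]
      have h1 : (fun _ : Fin n => (1 : ℝ)) = (1 : Fin n → ℝ) := rfl
      rw [← h1, hf, ← iteratedDeriv_eq_iteratedFDeriv]
      exact hcoeff n
    rw [nsmul_eq_mul] at hz
    have hcz : q.coeff n = 0 := by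
      rcases mul_eq_zero.mp hz with h' | h'
      · exact absurd h' (Nat.cast_ne_zero.mpr n.factorial_ne_zero)
      · exact h'
    exact FormalMultilinearSeries.coeff_eq_zero.mp hcz
  have hev : (fun x : ℝ => v x + (-c) * hypergeomP l (x : ℂ)) =ᶠ[𝓝 (0 : ℝ)]
      (0 : ℝ → ℂ) := by
    have hball : Metric.eball (0 : ℝ) r ∈ 𝓝 (0 : ℝ) := Metric.eball_mem_nhds _ hqb.r_pos
    filter_upwards [hball] with y hy
    have hs := hqb.hasSum (by simpa [edist_zero_right] using hy)
    simp only [hq0, ContinuousMultilinearMap.zero_apply] at hs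
    have h := hs.unique hasSum_zero
    simpa using h
  have heqon : EqOn (fun x : ℝ => v x + (-c) * hypergeomP l (x : ℂ)) 0 (Ioo (-ρ) ρ) :=
    hA.eqOn_zero_of_preconnected_of_eventuallyEq_zero
      (isPreconnected_Ioo) h0 hev
  refine ⟨c, fun x hx => ?_⟩
  have h := heqon hx
  simp only [Pi.zero_apply] at h
  linear_combination h
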